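/- arXiv:2009.13127 — 5 statements merged into one kernel-verified Lean document; each statement's English description precedes it below -/
import Mathlib

section
/- Let W := (1/w) ∂/∂w on ℂ×. The time-1 map of W is defined and holomorphic on ℂ \ γ where γ := i√2·[-1,1], and there it equals w ↦ ±√(2 + w^2) (with the branch equal to w near w large real). -/
/-!
The trajectory of `ẇ = 1/w` through `w` is `w(t) = w · (1 + 2t/w²)^{1/2}` with the principal
square root, the branch asymptotic to `w` for large `w`. It solves `w(t)² = w² + 2t` and stays
holomorphic and nonzero as long as `1 + 2t/w²` avoids `(-∞, 0]`; for some `t ∈ [0, 1]` this can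
only fail when `w² ∈ [-2, 0]`, i.e. when `w` lies on the segment `i√2·[-1, 1]`.
-/

open Set

namespace ReciprocalFlow

open Complex

def branchCut : Set ℂ := {w | ∃ s : ℝ, |s| ≤ 1 ∧ w = I * ((Real.sqrt 2 : ℂ) * s)}

noncomputable def flow (t w : ℂ) : ℂ := w * (1 + 2 * t / w ^ 2) ^ (1 / 2 : ℂ)

lemma zero_mem_branchCut : (0 : ℂ) ∈ branchCut := ⟨0, by simp, by simp⟩

lemma ne_zero_of_notMem_branchCut {w : ℂ} (hw : w ∉ branchCut) : w ≠ 0 :=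
  fun h => hw (h ▸ zero_mem_branchCut)

lemma mem_branchCut_of_sq_eq {w : ℂ} {c : ℝ} (hc : c ∈ Icc (-2) 0) (hw : w ^ 2 = c) :
    w ∈ branchCut := by
  set s := Real.sqrt (-c / 2)
  have hs : |s| ≤ 1 := by
    rw [abs_of_nonneg (Real.sqrt_nonneg _), Real.sqrt_le_one]
    linarith [hc.1]
  have hsq : w ^ 2 = (I * ((Real.sqrt 2 : ℂ) * s)) ^ 2 := by
    have h2 : ((Real.sqrt 2 : ℂ)) ^ 2 = 2 := by exact_mod_cast Real.sq_sqrt zero_le_two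
    have hs2 : (s : ℂ) ^ 2 = -c / 2 := by
      exact_mod_cast Real.sq_sqrt (by linarith [hc.2] : 0 ≤ -c / 2)
    rw [hw, mul_pow, mul_pow, I_sq, h2, hs2]
    ring
  rcases sq_eq_sq_iff_eq_or_eq_neg.1 hsq with h | h
  · exact ⟨s, hs, h⟩
  · exact ⟨-s, by rwa [abs_neg], by rw [h]; push_cast; ring⟩

lemma one_add_div_sq_mem_slitPlane {w : ℂ} (hw : w ∉ branchCut) {t : ℝ} (ht : t ∈ Icc 0 1) :
    1 + 2 * (t : ℂ) / w ^ 2 ∈ slitPlane := by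
  have hw0 := ne_zero_of_notMem_branchCut hw
  by_contra h
  obtain ⟨hre, him⟩ : (1 + 2 * (t : ℂ) / w ^ 2).re ≤ 0 ∧ (1 + 2 * (t : ℂ) / w ^ 2).im = 0 := by
    simpa [mem_slitPlane_iff] using h
  set r := (1 + 2 * (t : ℂ) / w ^ 2).re
  have hz : 1 + 2 * (t : ℂ) / w ^ 2 = r := Complex.ext (by simp [r]) (by simp [him])
  have hr : r - 1 < 0 := by linarith
  -- `w² = 2t/(r - 1)` is then a real number in `[-2, 0]`
  refine hw (mem_branchCut_of_sq_eq (c := 2 * t / (r - 1)) ⟨?_, ?_⟩ ?_)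
  · rw [le_div_iff_of_neg hr]; nlinarith [ht.2]
  · exact div_nonpos_of_nonneg_of_nonpos (by linarith [ht.1]) hr.le
  · have hr' : (r : ℂ) - 1 ≠ 0 := by exact_mod_cast hr.ne
    push_cast
    rw [eq_div_iff hr', ← hz]
    field_simp
    ring

lemma flow_zero (w : ℂ) : flow 0 w = w := by simp [flow]

lemma flow_sq {w : ℂ} (hw : w ≠ 0) (t : ℂ) : flow t w ^ 2 = w ^ 2 + 2 * t := by
  rw [flow, mul_pow, one_div, cpow_ofNat_inv_pow]
  field_simp

lemma flow_ne_zero {t w : ℂ} (hw : w ≠ 0) (h : 1 + 2 * t / w ^ 2 ∈ slitPlane) : flow t w ≠ 0 :=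
  mul_ne_zero hw (by rw [Ne, cpow_eq_zero_iff]; exact fun h' => slitPlane_ne_zero h h'.1)

lemma flow_ofReal {x t : ℝ} (hx : 0 < x) (ht : 0 ≤ x ^ 2 + 2 * t) :
    flow t x = Real.sqrt (x ^ 2 + 2 * t) := by
  have hu : 0 ≤ 1 + 2 * t / x ^ 2 := by
    rw [show 1 + 2 * t / x ^ 2 = (x ^ 2 + 2 * t) / x ^ 2 by field_simp]; positivity
  have hcast : (1 + 2 * (t : ℂ) / (x : ℂ) ^ 2) = ((1 + 2 * t / x ^ 2 : ℝ) : ℂ) := by push_cast; ring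
  rw [flow, hcast, show (1 / 2 : ℂ) = ((1 / 2 : ℝ) : ℂ) by norm_num, ← ofReal_cpow hu,
    ← Real.sqrt_eq_rpow, ← ofReal_mul,
    show x ^ 2 + 2 * t = (1 + 2 * t / x ^ 2) * x ^ 2 by field_simp, Real.sqrt_mul hu,
    Real.sqrt_sq hx.le, mul_comm]

lemma differentiableAt_flow {t w : ℂ} (hw : w ≠ 0) (h : 1 + 2 * t / w ^ 2 ∈ slitPlane) :
    DifferentiableAt ℂ (flow t) w := by
  have hw2 : w ^ 2 ≠ 0 := pow_ne_zero 2 hw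
  unfold flow
  fun_prop (disch := assumption)

lemma hasDerivAt_flow {t w : ℂ} (hw : w ≠ 0) (h : 1 + 2 * t / w ^ 2 ∈ slitPlane) :
    HasDerivAt (fun τ => flow τ w) (1 / flow t w) t := by
  have hu : HasDerivAt (fun τ : ℂ => 1 + 2 * τ / w ^ 2) (2 / w ^ 2) t := by
    simpa using ((hasDerivAt_id t).const_mul 2).div_const (w ^ 2) |>.const_add 1
  have hv : (1 + 2 * t / w ^ 2) ^ (1 / 2 : ℂ) ≠ 0 := fun h0 =>
    flow_ne_zero hw h (by rw [flow, h0, mul_zero])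
  refine ((hu.cpow_const (c := 1 / 2) h).const_mul w).congr_deriv ?_
  rw [show (1 / 2 : ℂ) - 1 = -(1 / 2) by norm_num, cpow_neg, flow]
  field_simp

end ReciprocalFlow

/-- For `W = (1/w) ∂/∂w`, the time-1 map is defined and holomorphic on
`ℂ \ γ`, `γ = i√2·[-1,1]`, where it satisfies `Δ(w)² = w² + 2`, with the branch
equal to `√(x²+2)` on the positive real axis (branch asymptotic to `w`). -/
theorem stmt2 :
    ∃ Δ : ℂ → ℂ,
      DifferentiableOn ℂ Δ
        {w : ℂ | ∃ s : ℝ, |s| ≤ 1 ∧ w = Complex.I * ((Real.sqrt 2 : ℂ) * s)}ᶜ ∧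
      (∀ w : ℂ, w ∉ {w : ℂ | ∃ s : ℝ, |s| ≤ 1 ∧ w = Complex.I * ((Real.sqrt 2 : ℂ) * s)} →
        (Δ w) ^ 2 = w ^ 2 + 2) ∧
      (∀ x : ℝ, 0 < x → Δ (x : ℂ) = (Real.sqrt (x ^ 2 + 2) : ℂ)) ∧
      (∀ w : ℂ, w ∉ {w : ℂ | ∃ s : ℝ, |s| ≤ 1 ∧ w = Complex.I * ((Real.sqrt 2 : ℂ) * s)} →
        ∃ z : ℝ → ℂ, z 0 = w ∧ z 1 = Δ w ∧
          ∀ t ∈ Icc (0 : ℝ) 1, z t ≠ 0 ∧ HasDerivAt z (1 / z t) t) := by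
  open ReciprocalFlow in
  refine ⟨flow 1, fun w hw => ?_, fun w hw => ?_, fun x hx => ?_, fun w hw => ?_⟩
  · have h := one_add_div_sq_mem_slitPlane hw (t := 1) ⟨zero_le_one, le_rfl⟩
    rw [Complex.ofReal_one] at h
    exact (differentiableAt_flow (ne_zero_of_notMem_branchCut hw) h).differentiableWithinAt
  · rw [flow_sq (ne_zero_of_notMem_branchCut hw), mul_one]
  · simpa using flow_ofReal hx (t := 1) (by positivity)
  · refine ⟨fun t => flow t w, by simpa using flow_zero w, by simp, fun t ht => ?_⟩
    have hw0 := ne_zero_of_notMem_branchCut hw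
    have h := one_add_div_sq_mem_slitPlane hw ht
    exact ⟨flow_ne_zero hw0 h, (hasDerivAt_flow hw0 h).comp_ofReal⟩
end

section
/- For the vector field X_0(z) = (λ z^2/(1+z^2)) ∂/∂z (case μ = 0), the time-1 map Δ_0 satisfies the algebraic relation z·Δ_0(z)^2 − (z^2 + λz − 1)·Δ_0(z) − z = 0 for all z near 0. -/
/-!
Separating variables, a solution `w` of `ẇ = λ w²/(1 + w²)` with `w(0) = z` satisfies
`(w - z)(1 + 1/(z w)) = λ t`. Cleared of denominators this is the vanishing of
`ψ(t) = z w² + (1 - z² - λ t z) w - z`, and `ψ` itself solves the linear equation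
`ψ' = (λ w/(1 + w²)) ψ` with `ψ(0) = 0`, so Grönwall's inequality forces `ψ ≡ 0`;
at `t = 1` this is the claimed relation for `Δ₀(z) = w(1)`.
-/

open Set

theorem eq_zero_of_hasDerivWithinAt_smul_self {𝕜 E : Type*} [NormedField 𝕜]
    [NormedAddCommGroup E] [NormedSpace ℝ E] [NormedSpace 𝕜 E]
    {f : ℝ → E} {c : ℝ → 𝕜} {a b : ℝ}
    (hf : ContinuousOn f (Icc a b)) (hc : ContinuousOn c (Icc a b))
    (hf' : ∀ t ∈ Ico a b, HasDerivWithinAt f (c t • f t) (Ici t) t) (ha : f a = 0) :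
    ∀ t ∈ Icc a b, f t = 0 := by
  obtain ⟨K, hK⟩ := isCompact_Icc.exists_bound_of_continuousOn hc
  refine eq_zero_of_abs_deriv_le_mul_abs_self_of_eq_zero_right (K := K) hf hf' ha fun t ht => ?_
  rw [norm_smul]
  exact mul_le_mul_of_nonneg_right (hK t (Ico_subset_Icc_self ht)) (norm_nonneg _)

def flowDefect (lam z : ℂ) (t : ℝ) (w : ℂ) : ℂ :=
  z * w ^ 2 + (1 - z ^ 2 - lam * t * z) * w - z

theorem hasDerivAt_flowDefect {lam z : ℂ} {w : ℝ → ℂ} {t : ℝ}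
    (hw : HasDerivAt w (lam * w t ^ 2 / (1 + w t ^ 2)) t) (hreg : 1 + w t ^ 2 ≠ 0) :
    HasDerivAt (fun s => flowDefect lam z s (w s))
      (lam * w t / (1 + w t ^ 2) * flowDefect lam z t (w t)) t := by
  have hcoef : HasDerivAt (fun s : ℝ => 1 - z ^ 2 - lam * s * z) (-(lam * z)) t := by
    simpa using (((hasDerivAt_id t).ofReal_comp.const_mul lam).mul_const z).const_sub (1 - z ^ 2)
  refine ((((hw.pow 2).const_mul z).add (hcoef.mul hw)).sub_const z).congr_deriv ?_
  simp only [flowDefect]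
  field_simp
  ring

theorem stmt3_general (lam : ℝ)
    (U : Set ℂ)
    (Δ : ℂ → ℂ) (γ : ℂ → ℝ → ℂ)
    (hinit : ∀ z ∈ U, γ z 0 = z)
    (hend : ∀ z ∈ U, γ z 1 = Δ z)
    (hreg : ∀ z ∈ U, ∀ t ∈ Icc (0 : ℝ) 1, 1 + (γ z t) ^ 2 ≠ 0)
    (hode : ∀ z ∈ U, ∀ t ∈ Icc (0 : ℝ) 1,
      HasDerivAt (γ z) ((lam : ℂ) * (γ z t) ^ 2 / (1 + (γ z t) ^ 2)) t) :
    ∀ z ∈ U, z * (Δ z) ^ 2 - (z ^ 2 + (lam : ℂ) * z - 1) * Δ z - z = 0 := by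
  intro z hz
  have hγ : ContinuousOn (γ z) (Icc 0 1) := fun t ht =>
    (hode z hz t ht).continuousAt.continuousWithinAt
  have hdefect_deriv : ∀ t ∈ Icc (0 : ℝ) 1, HasDerivAt (fun s => flowDefect lam z s (γ z s))
      (lam * γ z t / (1 + γ z t ^ 2) * flowDefect lam z t (γ z t)) t := fun t ht =>
    hasDerivAt_flowDefect (hode z hz t ht) (hreg z hz t ht)
  have hdefect_zero := eq_zero_of_hasDerivWithinAt_smul_self
    (fun t ht => (hdefect_deriv t ht).continuousAt.continuousWithinAt)
    (continuousOn_const.mul hγ |>.div (continuousOn_const.add (hγ.pow 2)) (hreg z hz))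
    (fun t ht => (hdefect_deriv t (Ico_subset_Icc_self ht)).hasDerivWithinAt)
    (by simp only [flowDefect, hinit z hz, Complex.ofReal_zero]; ring)
    1 (right_mem_Icc.mpr zero_le_one)
  rw [flowDefect, hend z hz] at hdefect_zero
  push_cast at hdefect_zero
  linear_combination hdefect_zero

/-- For `X₀(z) = λ z²/(1+z²) ∂/∂z` (case `μ = 0`), the time-1 map `Δ₀` satisfies
`z Δ₀(z)² − (z² + λz − 1) Δ₀(z) − z = 0` near `0`. -/
theorem stmt3 (lam : ℝ) (hlam : 0 < lam)
    (U : Set ℂ) (hU : U ∈ nhds (0 : ℂ))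
    (Δ : ℂ → ℂ) (γ : ℂ → ℝ → ℂ)
    (hinit : ∀ z ∈ U, γ z 0 = z)
    (hend : ∀ z ∈ U, γ z 1 = Δ z)
    (hreg : ∀ z ∈ U, ∀ t ∈ Icc (0 : ℝ) 1, 1 + (γ z t) ^ 2 ≠ 0)
    (hode : ∀ z ∈ U, ∀ t ∈ Icc (0 : ℝ) 1,
      HasDerivAt (γ z) ((lam : ℂ) * (γ z t) ^ 2 / (1 + (γ z t) ^ 2)) t) :
    ∀ z ∈ U, z * (Δ z) ^ 2 - (z ^ 2 + (lam : ℂ) * z - 1) * Δ z - z = 0 :=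
  stmt3_general lam U Δ γ hinit hend hreg hode
end

section
/- Let X be a holomorphic vector field on a domain, f a holomorphic function, and suppose the time-f flow Ψ(z) := Φ_X^{f(z)}(z) is holomorphic near z. Set X_f := X/(1 + X·f). Then (X_f · Ψ)(z) = X(Ψ(z)), i.e. X·Ψ/(1 + X·f) = X ∘ Ψ. In particular if Ψ is locally biholomorphic then Ψ^* X = X_f. -/
/-!
Along the flow, `Ψ(Φ^ε z) = Φ^{f(Φ^ε z)}(Φ^ε z) = Φ^{f(Φ^ε z) + ε}(z)` by the group law of the
flow. Differentiating at `ε = 0`, the left side gives `Ψ'(z) R(z)` and the right side gives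
`R(Ψ z) (f'(z) R(z) + 1)`.

The group law `Φ^t ∘ Φ^s = Φ^{t+s}` holds because both sides solve `w' = R(w)` with the same
initial value: uniqueness of real-time solutions makes them agree on a real segment around `0`,
and both are entire in `t`, so the identity theorem propagates the equality to all of `ℂ`.
-/

open Filter Topology

theorem AnalyticOnNhd.eq_of_eventuallyEq_ofReal {f g : ℂ → ℂ} (hf : AnalyticOnNhd ℂ f Set.univ)
    (hg : AnalyticOnNhd ℂ g Set.univ) {x₀ : ℝ}
    (h : (fun x : ℝ => f x) =ᶠ[𝓝 x₀] fun x : ℝ => g x) : f = g := by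
  have hofReal : Tendsto ((↑) : ℝ → ℂ) (𝓝[≠] x₀) (𝓝[≠] (x₀ : ℂ)) :=
    Complex.continuous_ofReal.continuousWithinAt.tendsto_nhdsWithin fun _ _ ↦ by simp_all
  exact hf.eq_of_frequently_eq hg <|
    hofReal.frequently (h.filter_mono nhdsWithin_le_nhds).frequently

theorem eventuallyEq_ofReal_of_hasDerivAt_of_eq {R a b : ℂ → ℂ} (hR : ContDiffAt ℂ 1 R (a 0))
    (ha : ∀ t, HasDerivAt a (R (a t)) t) (hb : ∀ t, HasDerivAt b (R (b t)) t)
    (h0 : a 0 = b 0) : (fun x : ℝ => a x) =ᶠ[𝓝 0] fun x : ℝ => b x := by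
  obtain ⟨K, u, hu, hRu⟩ := hR.exists_lipschitzOnWith
  have solves {c : ℂ → ℂ} (hc : ∀ t, HasDerivAt c (R (c t)) t) (hc0 : c 0 = a 0) :
      ∀ᶠ x : ℝ in 𝓝 0, HasDerivAt (fun y : ℝ => c y) (R (c x)) x ∧ c x ∈ u := by
    have hcont : Tendsto (fun y : ℝ => c y) (𝓝 0) (𝓝 (a 0)) := by
      simpa [hc0] using (hc 0).comp_ofReal.continuousAt.tendsto
    filter_upwards [hcont.eventually_mem hu] with x hx using ⟨(hc x).comp_ofReal, hx⟩
  exact ODE_solution_unique_of_eventually (v := fun _ => R) (s := fun _ => u)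
    (.of_forall fun _ => hRu) (solves ha rfl) (solves hb h0.symm) (by simpa using h0)

theorem ODE_solution_unique_complex {R a b : ℂ → ℂ} (hR : ContDiffAt ℂ 1 R (a 0))
    (ha : ∀ t, HasDerivAt a (R (a t)) t) (hb : ∀ t, HasDerivAt b (R (b t)) t)
    (h0 : a 0 = b 0) : a = b :=
  AnalyticOnNhd.eq_of_eventuallyEq_ofReal
    (fun t _ => Differentiable.analyticAt (fun x => (ha x).differentiableAt) t)
    (fun t _ => Differentiable.analyticAt (fun x => (hb x).differentiableAt) t)
    (eventuallyEq_ofReal_of_hasDerivAt_of_eq hR ha hb h0)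

theorem flow_add {R : ℂ → ℂ} {Φ : ℂ → ℂ → ℂ} (hR : Differentiable ℂ R)
    (hinit : ∀ z, Φ 0 z = z) (hflow : ∀ z t, HasDerivAt (fun s => Φ s z) (R (Φ t z)) t)
    (z s : ℂ) : (fun t => Φ t (Φ s z)) = fun t => Φ (t + s) z := by
  refine ODE_solution_unique_complex hR.contDiff.contDiffAt (hflow (Φ s z)) (fun t => ?_)
    (by simp [hinit])
  exact (hflow z (t + s)).comp_add_const t s

theorem stmt5_general (U : Set ℂ) (hU : IsOpen U) (R f : ℂ → ℂ) (Φ : ℂ → ℂ → ℂ)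
    (hR : Differentiable ℂ R)
    (hf : DifferentiableOn ℂ f U)
    (hinit : ∀ z : ℂ, Φ 0 z = z)
    (hflow : ∀ z t : ℂ, HasDerivAt (fun s => Φ s z) (R (Φ t z)) t)
    (hΨ : DifferentiableOn ℂ (fun z => Φ (f z) z) U) :
    ∀ z ∈ U, R z * deriv (fun w => Φ (f w) w) z
      = (1 + R z * deriv f z) * R (Φ (f z) z) := by
  intro z hz
  have hcurve : HasDerivAt (fun ε => Φ ε z) (R z) 0 := by simpa [hinit] using hflow z 0
  have hleft : HasDerivAt (fun ε => Φ (f (Φ ε z)) (Φ ε z))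
      (deriv (fun w => Φ (f w) w) z * R z) 0 := by
    have hΨz := (hΨ.differentiableAt (hU.mem_nhds hz)).hasDerivAt
    exact hΨz.comp_of_eq 0 hcurve (hinit z).symm
  have hright : HasDerivAt (fun ε => Φ (f (Φ ε z) + ε) z)
      (R (Φ (f z) z) * (deriv f z * R z + 1)) 0 := by
    have hfz := (hf.differentiableAt (hU.mem_nhds hz)).hasDerivAt
    have hg := (hfz.comp_of_eq 0 hcurve (hinit z).symm).add (hasDerivAt_id' 0)
    exact (hflow z (f z)).comp_of_eq 0 hg (by simp [hinit])
  have hsame : (fun ε => Φ (f (Φ ε z)) (Φ ε z)) = fun ε => Φ (f (Φ ε z) + ε) z :=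
    funext fun ε => congrFun (flow_add hR hinit hflow z ε) (f (Φ ε z))
  have hderiv := (hsame ▸ hleft).unique hright
  linear_combination hderiv

/-- If `Ψ(z) = Φ_X^{f(z)}(z)` is holomorphic, then `X·Ψ/(1 + X·f) = X ∘ Ψ`,
i.e. `R(z)·Ψ'(z) = (1 + R(z) f'(z))·R(Ψ(z))`; in particular, where `Ψ` is locally
biholomorphic it conjugates `X_f = X/(1 + X·f)` to `X`. -/
theorem stmt5 (U : Set ℂ) (hU : IsOpen U) (R f : ℂ → ℂ) (Φ : ℂ → ℂ → ℂ)
    (hR : Differentiable ℂ R)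
    (hf : DifferentiableOn ℂ f U)
    (hinit : ∀ z : ℂ, Φ 0 z = z)
    (hflow : ∀ z t : ℂ, HasDerivAt (fun s => Φ s z) (R (Φ t z)) t)
    (hΦz : ∀ t : ℂ, Differentiable ℂ fun z => Φ t z)
    (hΨ : DifferentiableOn ℂ (fun z => Φ (f z) z) U) :
    ∀ z ∈ U, R z * deriv (fun w => Φ (f w) w) z
      = (1 + R z * deriv f z) * R (Φ (f z) z) :=
  stmt5_general U hU R f Φ hR hf hinit hflow hΨ
end

section
/- Let X be a holomorphic vector field on the punctured disc 𝒟 := ρ𝔻 \ {0} such that sup |X(r𝕊¹)| ≤ C/r for all 0 < r < ρ. If 0 < r < ρ and 0 < √(r²−2C) and √(r²+2C) < ρ, then for every |τ| ≤ 1 the flow Φ_X^τ is holomorphic on a neighborhood of the circle r𝕊¹ and maps r𝕊¹ into 𝒟; indeed √(r²−2C) ≤ |Φ_X^τ(z)| ≤ √(r²+2C) for |z| = r. -/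
open Set

/-!
Along a trajectory `γ` of `τ R` the squared modulus `‖γ‖²` has derivative `2 ⟪γ, τ R(γ)⟫`,
of size at most `2 ‖γ‖ ‖R(γ)‖ ≤ 2C` because `‖R(z)‖ ≤ C / ‖z‖`. Over unit time `‖γ‖²` therefore
moves by at most `2C` away from `r²`, and taking square roots gives the bounds.
-/

section SquaredNorm

variable {F : Type*} [NormedAddCommGroup F] [InnerProductSpace ℝ F]

theorem abs_sq_norm_sub_sq_norm_le_of_norm_mul_norm_deriv_le {γ γ' : ℝ → F} {a b K : ℝ}
    (hab : a ≤ b) (hγ : ∀ t ∈ Icc a b, HasDerivAt γ (γ' t) t)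
    (hK : ∀ t ∈ Icc a b, ‖γ t‖ * ‖γ' t‖ ≤ K) :
    |‖γ b‖ ^ 2 - ‖γ a‖ ^ 2| ≤ 2 * K * (b - a) := by
  have hderiv : ∀ t ∈ Icc a b,
      HasDerivWithinAt (‖γ ·‖ ^ 2) (2 * inner ℝ (γ t) (γ' t)) (Icc a b) t :=
    fun t ht => (hγ t ht).norm_sq.hasDerivWithinAt
  have hbound : ∀ t ∈ Icc a b, ‖2 * inner ℝ (γ t) (γ' t)‖ ≤ 2 * K := fun t ht => by
    rw [Real.norm_eq_abs, abs_mul, abs_two]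
    exact mul_le_mul_of_nonneg_left ((abs_real_inner_le_norm _ _).trans (hK t ht)) zero_le_two
  simpa [Real.norm_eq_abs, abs_of_nonneg (sub_nonneg.mpr hab)] using
    (convex_Icc a b).norm_image_sub_le_of_norm_hasDerivWithin_le hderiv hbound
      (left_mem_Icc.mpr hab) (right_mem_Icc.mpr hab)

end SquaredNorm

theorem norm_mul_norm_mul_apply_le_of_norm_le_div {R : ℂ → ℂ} {ρ C : ℝ}
    (hR : ∀ z : ℂ, z ≠ 0 → ‖z‖ < ρ → ‖R z‖ ≤ C / ‖z‖) {τ : ℂ} (hτ : ‖τ‖ ≤ 1)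
    {z : ℂ} (hz : z ∈ Metric.ball (0 : ℂ) ρ \ {0}) :
    ‖z‖ * ‖τ * R z‖ ≤ C := by
  obtain ⟨hzρ, hz0⟩ := hz
  rw [mem_ball_zero_iff] at hzρ
  have hzpos : 0 < ‖z‖ := norm_pos_iff.mpr hz0
  calc ‖z‖ * ‖τ * R z‖ ≤ ‖z‖ * ‖R z‖ := by
        rw [norm_mul]
        exact mul_le_mul_of_nonneg_left (mul_le_of_le_one_left (norm_nonneg _) hτ) hzpos.le
    _ ≤ ‖z‖ * (C / ‖z‖) := mul_le_mul_of_nonneg_left (hR z hz0 hzρ) hzpos.le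
    _ = C := mul_div_cancel₀ C hzpos.ne'

theorem stmt7_general (ρ C r : ℝ)
    (R : ℂ → ℂ)
    (hRb : ∀ z : ℂ, z ≠ 0 → ‖z‖ < ρ → ‖R z‖ ≤ C / ‖z‖)
    (τ : ℂ) (hτ : ‖τ‖ ≤ 1)
    (z : ℂ) (hz : ‖z‖ = r)
    (γ : ℝ → ℂ) (hγ0 : γ 0 = z)
    (hγmem : ∀ t ∈ Icc (0 : ℝ) 1, γ t ∈ Metric.ball (0 : ℂ) ρ \ {0})
    (hode : ∀ t ∈ Icc (0 : ℝ) 1, HasDerivAt γ (τ * R (γ t)) t) :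
    Real.sqrt (r ^ 2 - 2 * C) ≤ ‖γ 1‖ ∧
      ‖γ 1‖ ≤ Real.sqrt (r ^ 2 + 2 * C) ∧
      γ 1 ∈ Metric.ball (0 : ℂ) ρ \ {0} := by
  have hsq : |‖γ 1‖ ^ 2 - r ^ 2| ≤ 2 * C := by
    simpa [hγ0, hz] using
      abs_sq_norm_sub_sq_norm_le_of_norm_mul_norm_deriv_le zero_le_one hode
        fun t ht => norm_mul_norm_mul_apply_le_of_norm_le_div hRb hτ (hγmem t ht)
  obtain ⟨hlow, hup⟩ := abs_le.mp hsq
  refine ⟨(Real.sqrt_le_left (norm_nonneg _)).mpr (by linarith),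
    Real.le_sqrt_of_sq_le (by linarith), hγmem 1 (right_mem_Icc.mpr zero_le_one)⟩

/-- Flow control near a pole: if `|X| ≤ C/|z|` on the punctured disc of radius `ρ`,
`0 < √(r²−2C)` and `√(r²+2C) < ρ`, then for `|τ| ≤ 1` the time-`τ` flow maps the
circle of radius `r` into the punctured disc, with `√(r²−2C) ≤ |Φ_X^τ(z)| ≤ √(r²+2C)`. -/
theorem stmt7 (ρ C r : ℝ) (hC : 0 < C) (hr : 0 < r) (hrρ : r < ρ)
    (h1 : 2 * C < r ^ 2) (h2 : Real.sqrt (r ^ 2 + 2 * C) < ρ)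
    (R : ℂ → ℂ)
    (hRd : DifferentiableOn ℂ R (Metric.ball (0 : ℂ) ρ \ {0}))
    (hRb : ∀ z : ℂ, z ≠ 0 → ‖z‖ < ρ → ‖R z‖ ≤ C / ‖z‖)
    (τ : ℂ) (hτ : ‖τ‖ ≤ 1)
    (z : ℂ) (hz : ‖z‖ = r)
    (γ : ℝ → ℂ) (hγ0 : γ 0 = z)
    (hγmem : ∀ t ∈ Icc (0 : ℝ) 1, γ t ∈ Metric.ball (0 : ℂ) ρ \ {0})
    (hode : ∀ t ∈ Icc (0 : ℝ) 1, HasDerivAt γ (τ * R (γ t)) t) :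
    Real.sqrt (r ^ 2 - 2 * C) ≤ ‖γ 1‖ ∧
      ‖γ 1‖ ≤ Real.sqrt (r ^ 2 + 2 * C) ∧
      γ 1 ∈ Metric.ball (0 : ℂ) ρ \ {0} :=
  stmt7_general ρ C r R hRb τ hτ z hz γ hγ0 hγmem hode
end

section
/- Let a := e^{i5π/8}·ℝ_{>0} be a ray and z ∈ ℂ with Re z ≥ 0, z ≠ 0. Then sup_{ξ ∈ a} √|ξ|/|ξ − z| ≤ 1/(√(2|z|)·√(1 − cos(π/8))). -/
/-!
Write `ξ = e^{5πi/8} t` and `r = ‖z‖`. Since `Re ξ ≤ 0 ≤ Re z`, the angle between `ξ` and `z` is at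
least the angle between `ξ` and `i r`, so `‖ξ - z‖² ≥ t² + r² - 2 t r cos (π/8)`; and `t² + r² ≥ 2 t r`
turns this into `‖ξ - z‖² ≥ 2 r (1 - cos (π/8)) t = 2 r (1 - cos (π/8)) ‖ξ‖`.
-/

open Real

namespace Complex

theorem sq_norm_add_sq_norm_sub_le_sq_norm_sub {w z : ℂ} (hw : w.re ≤ 0) (hz : 0 ≤ z.re) :
    ‖w‖ ^ 2 + ‖z‖ ^ 2 - 2 * (|w.im| * ‖z‖) ≤ ‖w - z‖ ^ 2 := by
  have hre : w.re * z.re ≤ 0 := mul_nonpos_of_nonpos_of_nonneg hw hz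
  have him : w.im * z.im ≤ |w.im| * ‖z‖ :=
    calc w.im * z.im ≤ |w.im| * |z.im| := abs_mul w.im z.im ▸ le_abs_self _
      _ ≤ |w.im| * ‖z‖ := by gcongr; exact abs_im_le_norm z
  simp only [Complex.sq_norm, normSq_apply, sub_re, sub_im]
  nlinarith

theorem re_exp_I_mul_mul_ofReal (θ t : ℝ) : (exp (I * θ) * t).re = t * Real.cos θ := by
  rw [re_mul_ofReal, mul_comm I, exp_ofReal_mul_I_re, mul_comm]

theorem im_exp_I_mul_mul_ofReal (θ t : ℝ) : (exp (I * θ) * t).im = t * Real.sin θ := by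
  rw [im_mul_ofReal, mul_comm I, exp_ofReal_mul_I_im, mul_comm]

end Complex

theorem sqrt_div_le_one_div_sqrt {t A K : ℝ} (hK : 0 < K) (ht : 0 ≤ t) (hA : 0 ≤ A)
    (h : K * t ≤ A ^ 2) : √t / A ≤ 1 / √K := by
  refine div_le_of_le_mul₀ hA (by positivity) ?_
  rw [one_div_mul_eq_div, le_div_iff₀ (sqrt_pos.2 hK), ← sqrt_mul ht]
  exact sqrt_le_iff.2 ⟨hA, by linarith⟩

theorem cos_pi_div_eight_lt_one : cos (π / 8) < 1 := by
  have := sin_pos_of_pos_of_lt_pi (x := π / 8) (by positivity) (by linarith [pi_pos])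
  nlinarith [sin_sq_add_cos_sq (π / 8), cos_le_one (π / 8)]

/-- For `ξ = e^{i5π/8} t` on the ray `a` and `z ≠ 0` with `Re z ≥ 0`,
`√|ξ|/|ξ − z| ≤ 1/(√(2|z|)·√(1 − cos(π/8)))`. -/
theorem stmt13 (z : ℂ) (hz : z ≠ 0) (hre : 0 ≤ z.re) (t : ℝ) (ht : 0 < t) :
    Real.sqrt (‖Complex.exp (Complex.I * (5 * (Real.pi : ℂ) / 8)) * (t : ℂ)‖) /
        ‖Complex.exp (Complex.I * (5 * (Real.pi : ℂ) / 8)) * (t : ℂ) - z‖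
      ≤ 1 / (Real.sqrt (2 * ‖z‖) * Real.sqrt (1 - Real.cos (Real.pi / 8))) := by
  rw [show 5 * (π : ℂ) / 8 = ((π / 8 + π / 2 : ℝ) : ℂ) by push_cast; ring]
  set ξ := Complex.exp (Complex.I * ((π / 8 + π / 2 : ℝ) : ℂ)) * t
  have hξ_norm : ‖ξ‖ = t := by
    rw [norm_mul, Complex.norm_exp_I_mul_ofReal, one_mul, Complex.norm_real, norm_of_nonneg ht.le]
  have hξ_re : ξ.re ≤ 0 := by
    rw [Complex.re_exp_I_mul_mul_ofReal, cos_add_pi_div_two]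
    nlinarith [sin_nonneg_of_nonneg_of_le_pi (x := π / 8) (by positivity) (by linarith [pi_pos])]
  have hξ_im : |ξ.im| = t * cos (π / 8) := by
    rw [Complex.im_exp_I_mul_mul_ofReal, sin_add_pi_div_two, abs_of_nonneg]
    exact mul_nonneg ht.le
      (cos_nonneg_of_neg_pi_div_two_le_of_le (by linarith [pi_pos]) (by linarith [pi_pos]))
  have hr : 0 < ‖z‖ := norm_pos_iff.2 hz
  rw [← sqrt_mul (by positivity), hξ_norm]
  refine sqrt_div_le_one_div_sqrt
    (mul_pos (by positivity) (sub_pos.2 cos_pi_div_eight_lt_one)) ht.le (norm_nonneg _) ?_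
  calc 2 * ‖z‖ * (1 - cos (π / 8)) * t ≤ t ^ 2 + ‖z‖ ^ 2 - 2 * (t * cos (π / 8) * ‖z‖) := by
        nlinarith [sq_nonneg (t - ‖z‖)]
    _ ≤ ‖ξ - z‖ ^ 2 := by
        simpa only [hξ_norm, hξ_im, mul_assoc] using
          Complex.sq_norm_add_sq_norm_sub_le_sq_norm_sub hξ_re hre
end
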